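/- There exists a versioned table (the paper's Table 3, with 8 indices, 5 versions arranged in the tree order 1 < 2 < 5, 1 < 3, 1 < 4 and 2,3,4 pairwise incomparable) and a version assignment ω with ω(C_AB)=5, ω(C_{A'B})=2, ω(C_{AB'})=3, ω(C_{A'B'})=4, such that each of the four snapshots T_{≤ω(C)} restricted to its context is a complete 8-row table with no missing data, yet the resulting family of pairwise count relations is the Bell family [[4,0],[0,4]], [[3,1],[1,3]], [[3,1],[1,3]], [[1,3],[3,1]], which has no global ℕ-valued section. -/

import Mathlib

/-- The version partial order of the paper's Table 3 on five versions
(0-indexed: version `k` of the paper is `k-1` here): the tree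
`1 < 2 < 5`, `1 < 3`, `1 < 4` with `2, 3, 4` pairwise incomparable. -/
def vle (u v : Fin 5) : Prop := u = v ∨ u = 0 ∨ (u = 1 ∧ v = 4)

instance : DecidableRel vle := fun u v => by unfold vle; infer_instance

/-- A row of a versioned table: (version, index, state in Bool^4 with
columns A, B, A', B'). -/
abbrev VRow := Fin 5 × Fin 8 × (Bool × Bool × Bool × Bool)

/-- The snapshot of a versioned table at version `v`: for each index, the
row with the maximal version `u ≤ v` present in the table. -/
def snapshot (T : Finset VRow) (v : Fin 5) : Finset VRow :=
  T.filter (fun r => vle r.1 v ∧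
    ∀ r' ∈ T, r'.2.1 = r.2.1 → vle r'.1 v → vle r'.1 r.1)

/-- Count relation of a snapshot for a two-column context. -/
def scount (T : Finset VRow) (v : Fin 5)
    (f g : Bool × Bool × Bool × Bool → Bool) (x y : Bool) : ℕ :=
  ((snapshot T v).filter (fun r => f r.2.2 = x ∧ g r.2.2 = y)).card

/-- The (X,Y)-marginal of a global count relation `N : Bool^4 → ℕ`. -/
def nmarg (N : Bool × Bool × Bool × Bool → ℕ)
    (f g : Bool × Bool × Bool × Bool → Bool) (x y : Bool) : ℕ :=
  ∑ σ ∈ Finset.univ.filter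
      (fun σ : Bool × Bool × Bool × Bool => f σ = x ∧ g σ = y), N σ

def cA : Bool × Bool × Bool × Bool → Bool := fun σ => σ.1
def cB : Bool × Bool × Bool × Bool → Bool := fun σ => σ.2.1
def cA' : Bool × Bool × Bool × Bool → Bool := fun σ => σ.2.2.1
def cB' : Bool × Bool × Bool × Bool → Bool := fun σ => σ.2.2.2

/-!
The table has a full set of eight rows at each of the paper's versions 2, 3, 4, 5 and none at
version 1. Below each of these versions the only other one carrying rows is 2 < 5, which 5
overrides, so every snapshot consists of exactly the rows of its own version and the four count
relations are read off the table.

A global section is ruled out by a CHSH-type inequality: pointwise, `A' ≠ B'` forces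
`A' ≠ B`, `B ≠ A` or `A ≠ B'`, so the mass on which `A'` and `B'` disagree is at most the sum
of the disagreement masses of the other three contexts. For the Bell family this reads
`6 ≤ 2 + 0 + 2`.
-/

open Finset

theorem eq_of_fst_eq_of_snd_fst_eq_of_card_image {α β γ : Type*} [DecidableEq α] [DecidableEq β]
    {T : Finset (α × β × γ)} (h : (T.image fun r => (r.1, r.2.1)).card = T.card) :
    ∀ r ∈ T, ∀ r' ∈ T, r.1 = r'.1 → r.2.1 = r'.2.1 → r = r' :=
  fun _ hr _ hr' h₁ h₂ => card_image_iff.mp h hr hr' (Prod.ext h₁ h₂)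

theorem existsUnique_of_card_filter_eq_one {α : Type*} {s : Finset α} {p : α → Prop}
    [DecidablePred p] (h : (s.filter p).card = 1) : ∃! a, a ∈ s ∧ p a := by
  simpa only [mem_filter] using card_eq_one_iff_existsUnique.mp h

theorem sum_filter_ne_le_add_add {α : Type*} (s : Finset α) (N : α → ℕ) (a b c d : α → Bool) :
    ∑ x ∈ s with a x ≠ d x, N x ≤
      ∑ x ∈ s with a x ≠ b x, N x + ∑ x ∈ s with c x ≠ b x, N x +
        ∑ x ∈ s with c x ≠ d x, N x := by
  simp only [sum_filter, ← sum_add_distrib]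
  refine sum_le_sum fun x _ => ?_
  cases a x <;> cases b x <;> cases c x <;> cases d x <;> simp

theorem nmarg_true_false_add_nmarg_false_true (N : Bool × Bool × Bool × Bool → ℕ)
    (f g : Bool × Bool × Bool × Bool → Bool) :
    nmarg N f g true false + nmarg N f g false true = ∑ σ with f σ ≠ g σ, N σ := by
  simp only [nmarg, sum_filter, ← sum_add_distrib]
  refine sum_congr rfl fun σ _ => ?_
  cases f σ <;> cases g σ <;> simp

theorem not_nmarg_eq_bell_family (N : Bool × Bool × Bool × Bool → ℕ)
    (hAB : ∀ x y : Bool, nmarg N cA cB x y = if x = y then 4 else 0)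
    (hA'B : ∀ x y : Bool, nmarg N cA' cB x y = if x = y then 3 else 1)
    (hAB' : ∀ x y : Bool, nmarg N cA cB' x y = if x = y then 3 else 1)
    (hA'B' : ∀ x y : Bool, nmarg N cA' cB' x y = if x = y then 1 else 3) : False := by
  have chsh := sum_filter_ne_le_add_add univ N cA' cB cA cB'
  simp only [← nmarg_true_false_add_nmarg_false_true, hAB, hA'B, hAB', hA'B'] at chsh
  simp at chsh

def bellTable : Finset VRow := {
  (4,0,(true,true,false,false)), (4,1,(true,true,false,false)),
  (4,2,(true,true,false,false)), (4,3,(true,true,false,false)),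
  (4,4,(false,false,false,false)), (4,5,(false,false,false,false)),
  (4,6,(false,false,false,false)), (4,7,(false,false,false,false)),
  (1,0,(false,true,true,false)), (1,1,(false,true,true,false)),
  (1,2,(false,true,true,false)), (1,3,(false,false,false,false)),
  (1,4,(false,false,false,false)), (1,5,(false,false,false,false)),
  (1,6,(false,false,true,false)), (1,7,(false,true,false,false)),
  (2,0,(true,false,false,true)), (2,1,(true,false,false,true)),
  (2,2,(true,false,false,true)), (2,3,(false,false,false,false)),
  (2,4,(false,false,false,false)), (2,5,(false,false,false,false)),
  (2,6,(true,false,false,false)), (2,7,(false,false,false,true)),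
  (3,0,(false,false,true,true)), (3,1,(false,false,false,false)),
  (3,2,(false,false,true,false)), (3,3,(false,false,true,false)),
  (3,4,(false,false,true,false)), (3,5,(false,false,false,true)),
  (3,6,(false,false,false,true)), (3,7,(false,false,false,true)) }

/-- Contexts and the versions at which they are observed:
ω(C_AB) = 5, ω(C_{A'B}) = 2, ω(C_{AB'}) = 3, ω(C_{A'B'}) = 4
(0-indexed: 4, 1, 2, 3). -/
theorem versioned_table_snapshots_give_bell_family :
    ∃ T : Finset VRow,
      -- (version, index) prefixes are unique
      (∀ r ∈ T, ∀ r' ∈ T, r.1 = r'.1 → r.2.1 = r'.2.1 → r = r') ∧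
      -- each context's snapshot is a complete 8-row table: exactly one row
      -- per index, with no missing data (states are total in Bool^4)
      (∀ v ∈ ({4, 1, 2, 3} : Finset (Fin 5)), ∀ i : Fin 8,
        ∃! r, r ∈ snapshot T v ∧ r.2.1 = i) ∧
      -- the four snapshot count relations are the Bell family
      (∀ x y : Bool, scount T 4 cA cB x y = if x = y then 4 else 0) ∧
      (∀ x y : Bool, scount T 1 cA' cB x y = if x = y then 3 else 1) ∧
      (∀ x y : Bool, scount T 2 cA cB' x y = if x = y then 3 else 1) ∧
      (∀ x y : Bool, scount T 3 cA' cB' x y = if x = y then 1 else 3) ∧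
      -- which has no global ℕ-valued section
      ¬ ∃ N : Bool × Bool × Bool × Bool → ℕ,
        (∀ x y : Bool, nmarg N cA cB x y = scount T 4 cA cB x y) ∧
        (∀ x y : Bool, nmarg N cA' cB x y = scount T 1 cA' cB x y) ∧
        (∀ x y : Bool, nmarg N cA cB' x y = scount T 2 cA cB' x y) ∧
        (∀ x y : Bool, nmarg N cA' cB' x y = scount T 3 cA' cB' x y) := by
  have hAB : ∀ x y : Bool, scount bellTable 4 cA cB x y = if x = y then 4 else 0 := by decide
  have hA'B : ∀ x y : Bool, scount bellTable 1 cA' cB x y = if x = y then 3 else 1 := by decide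
  have hAB' : ∀ x y : Bool, scount bellTable 2 cA cB' x y = if x = y then 3 else 1 := by decide
  have hA'B' : ∀ x y : Bool, scount bellTable 3 cA' cB' x y = if x = y then 1 else 3 := by
    decide
  refine ⟨bellTable, eq_of_fst_eq_of_snd_fst_eq_of_card_image (by decide),
    fun v hv i => existsUnique_of_card_filter_eq_one (by revert v i; decide),
    hAB, hA'B, hAB', hA'B', ?_⟩
  rintro ⟨N, h₁, h₂, h₃, h₄⟩
  exact not_nmarg_eq_bell_family N (fun x y => (h₁ x y).trans (hAB x y))
    (fun x y => (h₂ x y).trans (hA'B x y)) (fun x y => (h₃ x y).trans (hAB' x y))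
    (fun x y => (h₄ x y).trans (hA'B' x y))
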